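/- arXiv:1503.01192 — 3 statements merged into one kernel-verified Lean document; each statement's English description precedes it below -/
import Mathlib

section
/- Let X be a sequence of length n and let π be a permutation of {1,...,n} that stably partitions X around a pivot value m: all elements ≤ m keep their relative order and precede all elements > m, which also keep their relative order. Then the number of inversions of X that are 'fixed' by π, namely the number of pairs (i,j) with i < j, X_i > m ≥ X_j, equals the sum over all positions p with π(p) > p of (π(p) − p), where π(p) denotes the new position of the element originally at position p. -/
/-!
A big element (`> m`) is overtaken by exactly the small elements behind it, so it moves right by
their number, while a small element never moves right. Hence the positive displacements add up to
the number of pairs (big element, later small element), i.e. the fixed inversions.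
-/

/-- `π` stably partitions `X` around the pivot value `m`: small elements (`≤ m`)
keep their relative order and precede all big elements (`> m`), which also keep
their relative order. Here `π p` is the new position of the element originally at `p`. -/
def IsStablePartition {n : ℕ} {α : Type*} [LinearOrder α]
    (X : Fin n → α) (m : α) (π : Equiv.Perm (Fin n)) : Prop :=
  (∀ p q : Fin n, p < q → X p ≤ m → X q ≤ m → π p < π q) ∧
  (∀ p q : Fin n, p < q → m < X p → m < X q → π p < π q) ∧
  (∀ p q : Fin n, X p ≤ m → m < X q → π p < π q)

open Finset

theorem Equiv.val_apply_eq_card_filter_lt {ι : Type*} [Fintype ι] {n : ℕ} (e : ι ≃ Fin n)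
    (p : ι) : (e p : ℕ) = #{q | e q < e p} := by
  rw [← Fin.card_Iio (e p)]
  exact (card_equiv e fun q => by simp).symm

theorem Fin.val_eq_card_filter_lt {n : ℕ} (p : Fin n) : (p : ℕ) = #{q | q < p} :=
  (Equiv.refl _).val_apply_eq_card_filter_lt p

namespace IsStablePartition

variable {n : ℕ} {α : Type*} [LinearOrder α] {X : Fin n → α} {m : α} {π : Equiv.Perm (Fin n)}

theorem lt_of_apply_lt_apply_of_le (hπ : IsStablePartition X m π) {p q : Fin n} (hp : X p ≤ m)
    (h : π q < π p) : q < p := by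
  obtain ⟨hss, -, hsb⟩ := hπ
  by_contra! hpq
  rcases hpq.eq_or_lt with rfl | hpq
  · exact h.false
  rcases le_or_gt (X q) m with hq | hq
  · exact (hss p q hpq hp hq).asymm h
  · exact (hsb p q hp hq).asymm h

theorem apply_lt_apply_iff_of_lt (hπ : IsStablePartition X m π) {p q : Fin n} (hp : m < X p) :
    π q < π p ↔ q < p ∨ p < q ∧ X q ≤ m := by
  obtain ⟨-, hbb, hsb⟩ := hπ
  rcases le_or_gt (X q) m with hq | hq
  · simp only [hsb q p hq hp, hq, and_true, true_iff]
    exact (ne_of_apply_ne X (hq.trans_lt hp).ne).lt_or_gt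
  · simp only [hq.not_ge, and_false, or_false]
    refine ⟨fun h => ?_, fun h => hbb q p h hq hp⟩
    rcases lt_trichotomy q p with hqp | rfl | hpq
    · exact hqp
    · exact absurd h (lt_irrefl _)
    · exact absurd (hbb p q hpq hp hq) h.asymm

theorem apply_le_of_le (hπ : IsStablePartition X m π) {p : Fin n} (hp : X p ≤ m) : π p ≤ p := by
  rw [Fin.le_iff_val_le_val, Equiv.val_apply_eq_card_filter_lt, Fin.val_eq_card_filter_lt]
  exact card_le_card fun q => by simpa using hπ.lt_of_apply_lt_apply_of_le hp

theorem val_apply_of_lt (hπ : IsStablePartition X m π) {p : Fin n} (hp : m < X p) :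
    (π p : ℕ) = p + #{q | p < q ∧ X q ≤ m} := by
  rw [Equiv.val_apply_eq_card_filter_lt, Fin.val_eq_card_filter_lt,
    filter_congr fun q _ => hπ.apply_lt_apply_iff_of_lt hp, filter_or,
    card_union_of_disjoint (disjoint_filter.2 fun q _ hqp hpq => hqp.asymm hpq.1)]

theorem val_apply_sub_val (hπ : IsStablePartition X m π) (p : Fin n) :
    (π p : ℕ) - p = #{q | p < q ∧ X q ≤ m ∧ m < X p} := by
  rcases le_or_gt (X p) m with hp | hp
  · simp [hp.not_gt, Nat.sub_eq_zero_of_le (Fin.le_iff_val_le_val.1 (hπ.apply_le_of_le hp))]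
  · simp [hπ.val_apply_of_lt hp, hp]

end IsStablePartition

theorem fixed_inversions_eq_displacement_sum {n : ℕ} {α : Type*} [LinearOrder α]
    (X : Fin n → α) (m : α) (π : Equiv.Perm (Fin n))
    (hπ : IsStablePartition X m π) :
    (Finset.univ.filter
        (fun p : Fin n × Fin n => p.1 < p.2 ∧ X p.2 ≤ m ∧ m < X p.1)).card =
      ∑ p ∈ Finset.univ.filter (fun p : Fin n => p < π p), ((π p : ℕ) - (p : ℕ)) := by
  calc _ = ∑ p : Fin n, #{q | p < q ∧ X q ≤ m ∧ m < X p} := by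
        simp only [card_filter, Fintype.sum_prod_type]
    _ = ∑ p : Fin n, ((π p : ℕ) - p) := sum_congr rfl fun p _ => (hπ.val_apply_sub_val p).symm
    _ = _ := (sum_filter_of_ne fun p _ h => Fin.lt_def.2 (Nat.sub_ne_zero_iff_lt.1 h)).symm
end

section
/- In a stable partition of a sequence around a value m, for every element x > m (a 'big' element) at original position p, the difference π(p) − p equals the number of positions q > p whose element is ≤ m. -/
/-! The new position of a big element `p` is the number of elements placed before it: the small
elements and the big ones preceding `p`. These are the `p` elements preceding `p` together with
the small elements following it. -/

open Finset

theorem Equiv.Perm.val_apply_eq_card_filter_apply_lt {n : ℕ} (σ : Equiv.Perm (Fin n))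
    (p : Fin n) : (σ p : ℕ) = #{q | σ q < σ p} := by
  rw [card_equiv σ (t := Iio (σ p)) (by simp), Fin.card_Iio]

theorem Fin.card_filter_or_lt {n : ℕ} (P : Fin n → Prop) [DecidablePred P] {p : Fin n}
    (hp : ¬P p) : #{q | P q ∨ q < p} = p + #{q | p < q ∧ P q} := by
  have hsplit : ({q | P q ∨ q < p} : Finset (Fin n)) =
      Iio p ∪ ({q | p < q ∧ P q} : Finset (Fin n)) := by
    ext q
    simp only [mem_filter, mem_univ, true_and, mem_union, mem_Iio]
    rcases lt_trichotomy q p with h | rfl | h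
    · simp [h, h.not_gt]
    · simp [hp]
    · simp [h, h.not_gt]
  rw [hsplit, card_union_of_disjoint, Fin.card_Iio]
  exact disjoint_left.2 fun q hq hq' => (mem_Iio.1 hq).not_gt (mem_filter.1 hq').2.1

theorem IsStablePartition.apply_lt_apply_iff_of_pivot_lt {n : ℕ} {α : Type*} [LinearOrder α]
    {X : Fin n → α} {m : α} {π : Equiv.Perm (Fin n)} (hπ : IsStablePartition X m π)
    {p : Fin n} (hp : m < X p) (q : Fin n) : π q < π p ↔ X q ≤ m ∨ q < p := by
  obtain ⟨-, hbig, hsmall_big⟩ := hπ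
  rcases le_or_gt (X q) m with hq | hq
  · simpa [hq] using hsmall_big q p hq hp
  · rcases lt_trichotomy q p with h | rfl | h
    · simpa [h] using hbig q p h hq hp
    · simpa using hq
    · simpa [h.not_gt, hq.not_ge] using (hbig p q h hp hq).le

theorem big_element_displacement {n : ℕ} {α : Type*} [LinearOrder α]
    (X : Fin n → α) (m : α) (π : Equiv.Perm (Fin n))
    (hπ : IsStablePartition X m π) (p : Fin n) (hp : m < X p) :
    (π p : ℕ) - (p : ℕ) =
      (Finset.univ.filter (fun q : Fin n => p < q ∧ X q ≤ m)).card := by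
  rw [π.val_apply_eq_card_filter_apply_lt,
    filter_congr fun q _ => hπ.apply_lt_apply_iff_of_pivot_lt hp q,
    Fin.card_filter_or_lt _ hp.not_ge, Nat.add_sub_cancel_left]
end

section
/- If x is inserted at the front of the concatenation L_1 ++ ... ++ L_k of pairwise-ordered blocks, and x is placed at the front of block L_j where j is the least index with max(L_j) ≥ x (or j = k if no such index exists), then the resulting full sequence has exactly Σ_{i<j} |L_i| more inversions than the concatenation without x had, plus the inversions of x within L_j, which equal |{y ∈ L_j : y < x}|. -/
/-- The number of inversions of a sequence. -/
def numInv {n : ℕ} {α : Type*} [LinearOrder α] (X : Fin n → α) : ℕ :=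
  (Finset.univ.filter (fun p : Fin n × Fin n => p.1 < p.2 ∧ X p.2 < X p.1)).card

/-- The number of inversions of a list. -/
def listInv {α : Type*} [LinearOrder α] (l : List α) : ℕ := numInv l.get

/-!
The new front element `x` forms an inversion with exactly the later elements smaller than `x`.
Every element of a block before `L_j` is smaller than `x` and no element of a block after `L_j`
is, so these are all the elements of `L_1, …, L_{j-1}` together with the elements of `L_j`
below `x`.
-/

lemma numInv_cons {n : ℕ} {α : Type*} [LinearOrder α] (a : α) (f : Fin n → α) :
    numInv (Fin.cons a f) = (Finset.univ.filter (fun i : Fin n => f i < a)).card + numInv f := by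
  rw [numInv, numInv, Finset.card_filter, Finset.card_filter, Finset.card_filter,
    ← Finset.univ_product_univ, Finset.sum_product, Fin.sum_univ_succ]
  simp only [Fin.sum_univ_succ, Fin.cons_zero, Fin.cons_succ, Fin.not_lt_zero,
    Fin.succ_pos, Fin.succ_lt_succ_iff, false_and, if_false, true_and, lt_irrefl,
    zero_add]
  rw [← Finset.univ_product_univ, Finset.sum_product]

lemma List.card_filter_get {α : Type*} (l : List α) (p : α → Bool) :
    (Finset.univ.filter (fun i : Fin l.length => p (l.get i))).card = l.countP p := by
  rw [Finset.card_filter]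
  simp only [List.get_eq_getElem]
  rw [Fin.sum_univ_fun_getElem l (fun y => if p y then 1 else 0)]
  induction l with
  | nil => rfl
  | cons a l ih => simp [List.countP_cons, ih, add_comm]

lemma listInv_cons {α : Type*} [LinearOrder α] (x : α) (l : List α) :
    listInv (x :: l) = l.countP (· < x) + listInv l := by
  have hget : (x :: l).get = Fin.cons x l.get := by
    funext i
    exact Fin.cases rfl (fun _ => rfl) i
  rw [listInv, hget, numInv_cons, ← List.card_filter_get l (· < x), listInv]
  simp

lemma List.countP_flatten_eq_sum_length_add_countP {α : Type*} (L : List (List α))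
    (p : α → Bool) (j : Fin L.length) (hbefore : ∀ i < j, ∀ y ∈ L.get i, p y)
    (hafter : ∀ i, j < i → ∀ y ∈ L.get i, ¬ p y) :
    L.flatten.countP p =
      ∑ i ∈ Finset.univ.filter (· < j), (L.get i).length + (L.get j).countP p := by
  rw [List.countP_flatten, ← Fin.sum_univ_fun_getElem,
    ← Finset.sum_filter_add_sum_filter_not _ (· < j)]
  congr 1
  · refine Finset.sum_congr rfl fun i hi => ?_
    exact List.countP_eq_length.mpr (hbefore i (Finset.mem_filter.mp hi).2)
  · refine Finset.sum_eq_single_of_mem j (by simp) fun i hi hij => ?_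
    have hji : j < i := lt_of_le_of_ne (not_lt.mp (Finset.mem_filter.mp hi).2) (Ne.symm hij)
    exact List.countP_eq_zero.mpr (hafter i hji)

theorem insert_into_block_inversions_general {α : Type*} [LinearOrder α]
    (L : List (List α))
    (x : α) (j : Fin L.length)
    (hj_least : ∀ i : Fin L.length, i < j → ∀ y ∈ L.get i, y < x)
    (hj_after : ∀ i : Fin L.length, j < i → ∀ y ∈ L.get i, x ≤ y) :
    listInv (x :: L.flatten) =
      listInv L.flatten +
        (∑ i ∈ Finset.univ.filter (fun i : Fin L.length => i < j), (L.get i).length) +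
        (L.get j).countP (fun y => y < x) := by
  rw [listInv_cons, L.countP_flatten_eq_sum_length_add_countP _ j
    (fun i hi y hy => decide_eq_true (hj_least i hi y hy))
    (fun i hi y hy => by simpa using hj_after i hi y hy)]
  omega

/-- Inserting a new element `x` (which, being inserted in reverse order, logically
precedes every element already in the structure) into the block `L_j`, where `j` is
the least index whose block has maximum `≥ x` (or the last index if no such block
exists), adds exactly `∑_{i<j} |L_i|` inversions plus the inversions of `x`
within `L_j`, which equal `|{y ∈ L_j : y < x}|`. -/
theorem insert_into_block_inversions {α : Type*} [LinearOrder α]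
    (L : List (List α)) (hne : ∀ i : Fin L.length, L.get i ≠ [])
    (hord : L.Pairwise (fun A B => ∀ a ∈ A, ∀ b ∈ B, a ≤ b))
    (x : α) (j : Fin L.length)
    (hj : (∃ y ∈ L.get j, x ≤ y) ∨ (j : ℕ) = L.length - 1)
    (hj_least : ∀ i : Fin L.length, i < j → ∀ y ∈ L.get i, y < x)
    (hj_after : ∀ i : Fin L.length, j < i → ∀ y ∈ L.get i, x ≤ y) :
    listInv (x :: L.flatten) =
      listInv L.flatten +
        (∑ i ∈ Finset.univ.filter (fun i : Fin L.length => i < j), (L.get i).length) +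
        (L.get j).countP (fun y => y < x) :=
  insert_into_block_inversions_general L x j hj_least hj_after
end
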